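/- Consider the five points Q₁ = (0,0), Q₂ = (1,0), Q₃ = (1, (√5−1)/2), Q₄ = (0,1), Q₅ = ((1−√5)/2, (√5−1)/2) in ℝ². The area of the convex hull of {Q₁, ..., Q₅} equals √5/2, and for every triple 1 ≤ i < j < k ≤ 5 the area of the triangle with vertices Qᵢ, Qⱼ, Qₖ is at most 1/2 (with the value 1/2 attained, e.g., by Q₁, Q₂, Q₄). Hence the bound √5 in the pentagon area inequality is best possible. -/

import Mathlib

/-!
Put `t = (√5 - 1) / 2`, so that `t² + t = 1`; the points are the vertices of the convex pentagon
`(0,0), (1,0), (1,t), (0,1), (-t,t)`. Fanning out from the origin, it is the union of three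
triangles of areas `t/2`, `1/2`, `t/2` which meet only along lines, and lines are null, so its area
is `(1 + 2t)/2 = √5/2`. A triangle is the affine image of the standard one, of area `1/2`, so its
area is half the absolute value of a determinant; for the ten vertex triples this determinant is
one of `t`, `1`, `t + t² = 1` and `1 - t² = t`.
-/

open MeasureTheory Set Pointwise

section Hyperplane

variable {E : Type*} [NormedAddCommGroup E] [NormedSpace ℝ E] [MeasurableSpace E] [BorelSpace E]
  [FiniteDimensional ℝ E] (μ : Measure E) [μ.IsAddHaarMeasure]

theorem measure_setOf_linearMap_eq_zero {ℓ : E →ₗ[ℝ] ℝ} (hℓ : ℓ ≠ 0) (c : ℝ) :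
    μ {p | ℓ p = c} = 0 := by
  obtain ⟨w, hw⟩ : ∃ w, ℓ w ≠ 0 := by
    by_contra! h
    exact hℓ (LinearMap.ext h)
  set v := (c / ℓ w) • w
  have hsub : {p | ℓ p = c} ⊆ AffineSubspace.mk' v (LinearMap.ker ℓ) := by
    intro p hp
    simpa [AffineSubspace.mem_mk', v, hw, sub_eq_zero] using hp
  refine measure_mono_null hsub (Measure.addHaar_affineSubspace μ _ fun htop => ?_)
  have := congrArg AffineSubspace.direction htop
  rw [AffineSubspace.direction_mk', AffineSubspace.direction_top, LinearMap.ker_eq_top] at this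
  exact hℓ this

theorem measure_union_of_forall_le_of_forall_ge {ℓ : E →ₗ[ℝ] ℝ} (hℓ : ℓ ≠ 0) {c : ℝ}
    {A B : Set E} (hA : ∀ p ∈ A, ℓ p ≤ c) (hB : ∀ p ∈ B, c ≤ ℓ p)
    (hBm : NullMeasurableSet B μ) : μ (A ∪ B) = μ A + μ B :=
  measure_union₀ hBm <| measure_mono_null
    (fun p hp => le_antisymm (hA p hp.1) (hB p hp.2)) (measure_setOf_linearMap_eq_zero μ hℓ c)

end Hyperplane

section ConvexHull

variable {E : Type*} [AddCommGroup E] [Module ℝ E]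

theorem LinearMap.apply_le_of_mem_convexHull {ℓ : E →ₗ[ℝ] ℝ} {c : ℝ} {s : Set E}
    (h : ∀ q ∈ s, ℓ q ≤ c) {p : E} (hp : p ∈ convexHull ℝ s) : ℓ p ≤ c :=
  convexHull_min h (convex_halfSpace_le ℓ.isLinear c) hp

theorem LinearMap.le_apply_of_mem_convexHull {ℓ : E →ₗ[ℝ] ℝ} {c : ℝ} {s : Set E}
    (h : ∀ q ∈ s, c ≤ ℓ q) {p : E} (hp : p ∈ convexHull ℝ s) : c ≤ ℓ p :=
  convexHull_min h (convex_halfSpace_ge ℓ.isLinear c) hp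

theorem smul_add_smul_mem_convexHull_zero (u v : E) {α β : ℝ} (hα : 0 ≤ α) (hβ : 0 ≤ β)
    (hαβ : α + β ≤ 1) : α • u + β • v ∈ convexHull ℝ {0, u, v} := by
  have h := (convex_convexHull ℝ ({0, u, v} : Set E)).sum_mem (t := Finset.univ)
    (w := ![1 - α - β, α, β]) (z := ![0, u, v])
    (by simp [Fin.forall_fin_succ, hα, hβ]; linarith) (by simp [Fin.sum_univ_three]; ring)
    fun i _ => subset_convexHull ℝ _ (by fin_cases i <;> simp)
  simpa [Fin.sum_univ_three] using h

end ConvexHull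

def linForm (a b : ℝ) : ℝ × ℝ →ₗ[ℝ] ℝ := a • LinearMap.fst ℝ ℝ ℝ + b • LinearMap.snd ℝ ℝ ℝ

@[simp]
theorem linForm_apply (a b : ℝ) (p : ℝ × ℝ) : linForm a b p = a * p.1 + b * p.2 := rfl

theorem linForm_ne_zero {a b : ℝ} (h : (a, b) ≠ 0) : linForm a b ≠ 0 := fun h0 =>
  h (Prod.ext (by simpa using LinearMap.congr_fun h0 (1, 0))
    (by simpa using LinearMap.congr_fun h0 (0, 1)))

theorem volume_convexHull_stdTriangle :
    volume (convexHull ℝ {(0 : ℝ × ℝ), (1, 0), (0, 1)}) = ENNReal.ofReal (1 / 2) := by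
  set T := convexHull ℝ {(0 : ℝ × ℝ), (1, 0), (0, 1)}
  set R := regionBetween (fun _ => 0) (fun x => 1 - x) (Icc (0 : ℝ) 1)
  have hR : volume R = ENNReal.ofReal (1 / 2) := by
    rw [Measure.volume_eq_prod, volume_regionBetween_eq_integral (integrableOn_const (by simp))
      (by fun_prop : Continuous fun x : ℝ => 1 - x).integrableOn_Icc measurableSet_Icc
      (fun x hx => by linarith [hx.2]), integral_Icc_eq_integral_Ioc,
      ← intervalIntegral.integral_of_le zero_le_one]
    simp only [Pi.sub_apply, sub_zero]
    rw [intervalIntegral.integral_sub intervalIntegrable_const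
      intervalIntegral.intervalIntegrable_id]
    norm_num
  have hRT : R ⊆ T := by
    rintro ⟨x, y⟩ ⟨⟨hx0, -⟩, hy0, hy1⟩
    simpa using smul_add_smul_mem_convexHull_zero ((1 : ℝ), (0 : ℝ)) ((0 : ℝ), (1 : ℝ))
      hx0 hy0.le (by linarith)
  have hTR : T ⊆ R ∪ ({p | linForm 0 1 p = 0} ∪ {p | linForm 1 1 p = 1}) := by
    rintro ⟨x, y⟩ hp
    have hx := LinearMap.apply_le_of_mem_convexHull (ℓ := linForm (-1) 0) (c := 0)
      (by rintro q (rfl | rfl | rfl) <;> simp) hp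
    have hy := LinearMap.apply_le_of_mem_convexHull (ℓ := linForm 0 (-1)) (c := 0)
      (by rintro q (rfl | rfl | rfl) <;> simp) hp
    have hxy := LinearMap.apply_le_of_mem_convexHull (ℓ := linForm 1 1) (c := 1)
      (by rintro q (rfl | rfl | rfl) <;> simp) hp
    simp only [linForm_apply] at hx hy hxy
    simp only [mem_union, mem_ofPred_eq, linForm_apply, R, regionBetween, mem_Icc, mem_Ioo]
    obtain hy | hy := hy.lt_or_eq
    · obtain hxy | hxy := hxy.lt_or_eq
      · exact Or.inl ⟨⟨by linarith, by linarith⟩, by linarith, by linarith⟩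
      · exact Or.inr (Or.inr (by linarith))
    · exact Or.inr (Or.inl (by linarith))
  refine le_antisymm ?_ (hR ▸ measure_mono hRT)
  calc volume T ≤ volume R + volume ({p | linForm 0 1 p = 0} ∪ {p | linForm 1 1 p = 1}) :=
        (measure_mono hTR).trans (measure_union_le _ _)
    _ = ENNReal.ofReal (1 / 2) := by
      rw [hR, measure_union_null (measure_setOf_linearMap_eq_zero volume
        (linForm_ne_zero (by simp)) 0) (measure_setOf_linearMap_eq_zero volume
        (linForm_ne_zero (by simp)) 1), add_zero]

theorem volume_convexHull_triangle (a b c : ℝ × ℝ) :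
    volume (convexHull ℝ {a, b, c}) =
      ENNReal.ofReal (|(b.1 - a.1) * (c.2 - a.2) - (c.1 - a.1) * (b.2 - a.2)| / 2) := by
  set f := Matrix.toLin (Module.Basis.finTwoProd ℝ) (Module.Basis.finTwoProd ℝ)
    !![b.1 - a.1, c.1 - a.1; b.2 - a.2, c.2 - a.2]
  have hf : ∀ p : ℝ × ℝ, f p = p.1 • (b - a) + p.2 • (c - a) := fun p => by
    rw [Matrix.toLin_finTwoProd_apply]
    ext <;> simp <;> ring
  have hvert : ({a, b, c} : Set (ℝ × ℝ)) = a +ᵥ f '' {0, (1, 0), (0, 1)} := by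
    simp [image_insert_eq, hf, vadd_set_insert]
  rw [hvert, convexHull_vadd, ← f.image_convexHull, measure_vadd, Measure.addHaar_image_linearMap,
    volume_convexHull_stdTriangle, LinearMap.det_toLin, Matrix.det_fin_two_of,
    ← ENNReal.ofReal_mul (abs_nonneg _), mul_one_div]

def pentagon (t : ℝ) : Fin 5 → ℝ × ℝ := ![(0, 0), (1, 0), (1, t), (0, 1), (-t, t)]

theorem convexHull_pentagon {t : ℝ} (ht0 : 0 < t) (ht1 : t < 1) :
    convexHull ℝ (range (pentagon t)) = convexHull ℝ {0, (1, 0), (1, t)} ∪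
      (convexHull ℝ {0, (1, t), (0, 1)} ∪ convexHull ℝ {0, (0, 1), (-t, t)}) := by
  refine Subset.antisymm ?_ ?_
  · rintro ⟨x, y⟩ hp
    have hull_le : ∀ a b c : ℝ, (∀ i, a * (pentagon t i).1 + b * (pentagon t i).2 ≤ c) →
        a * x + b * y ≤ c := fun a b c h =>
      LinearMap.apply_le_of_mem_convexHull (ℓ := linForm a b) (forall_mem_range.2 h) hp
    -- the half-planes bounded by the five edges
    have h₁₂ := hull_le 0 (-1) 0 (by simp [Fin.forall_fin_succ, pentagon]; linarith)
    have h₂₃ := hull_le 1 0 1 (by simp [Fin.forall_fin_succ, pentagon]; linarith)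
    have h₃₄ := hull_le (1 - t) 1 1 <| by
      simp [Fin.forall_fin_succ, pentagon]; and_intros <;> nlinarith
    have h₄₅ := hull_le (t - 1) t t <| by
      simp [Fin.forall_fin_succ, pentagon]; and_intros <;> nlinarith
    have h₅₁ := hull_le (-1) (-1) 0 (by simp [Fin.forall_fin_succ, pentagon]; linarith)
    rcases le_total x 0 with hx | hx
    · obtain ⟨β, rfl⟩ : ∃ β, x = -t * β := ⟨-x / t, by field_simp⟩
      refine Or.inr (Or.inr ?_)
      convert smul_add_smul_mem_convexHull_zero ((0 : ℝ), (1 : ℝ)) (-t, t)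
        (α := y - t * β) (β := β) (by linarith) (by nlinarith) (by nlinarith) using 1
      ext <;> simp <;> ring
    rcases le_total y (t * x) with hy | hy
    · obtain ⟨β, rfl⟩ : ∃ β, y = t * β := ⟨y / t, by field_simp⟩
      refine Or.inl ?_
      convert smul_add_smul_mem_convexHull_zero ((1 : ℝ), (0 : ℝ)) (1, t)
        (α := x - β) (β := β) (by nlinarith) (by nlinarith) (by linarith) using 1
      ext <;> simp; ring
    · refine Or.inr (Or.inl ?_)
      convert smul_add_smul_mem_convexHull_zero ((1 : ℝ), t) (0, 1)
        (α := x) (β := y - t * x) hx (by linarith) (by linarith) using 1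
      ext <;> simp; ring
  · refine union_subset (convexHull_mono ?_)
      (union_subset (convexHull_mono ?_) (convexHull_mono ?_))
    · rintro q (rfl | rfl | rfl)
      exacts [⟨0, rfl⟩, ⟨1, rfl⟩, ⟨2, rfl⟩]
    · rintro q (rfl | rfl | rfl)
      exacts [⟨0, rfl⟩, ⟨2, rfl⟩, ⟨3, rfl⟩]
    · rintro q (rfl | rfl | rfl)
      exacts [⟨0, rfl⟩, ⟨3, rfl⟩, ⟨4, rfl⟩]

theorem volume_convexHull_pentagon {t : ℝ} (ht0 : 0 < t) (ht1 : t < 1) :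
    volume (convexHull ℝ (range (pentagon t))) = ENNReal.ofReal ((1 + 2 * t) / 2) := by
  set T₁ := convexHull ℝ {(0 : ℝ × ℝ), (1, 0), (1, t)}
  set T₂ := convexHull ℝ {(0 : ℝ × ℝ), (1, t), (0, 1)}
  set T₃ := convexHull ℝ {(0 : ℝ × ℝ), (0, 1), (-t, t)}
  have h₁ : ∀ p ∈ T₁, linForm (-t) 1 p ≤ 0 := fun p =>
    LinearMap.apply_le_of_mem_convexHull (by rintro q (rfl | rfl | rfl) <;> simp [ht0.le])
  have h₂₃ : ∀ p ∈ T₂ ∪ T₃, 0 ≤ linForm (-t) 1 p := by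
    rintro p (hp | hp) <;> refine LinearMap.le_apply_of_mem_convexHull ?_ hp <;>
      rintro q (rfl | rfl | rfl) <;> simp [ht0.le, add_nonneg, mul_nonneg]
  have h₂ : ∀ p ∈ T₂, linForm (-1) 0 p ≤ 0 := fun p =>
    LinearMap.apply_le_of_mem_convexHull (by rintro q (rfl | rfl | rfl) <;> simp)
  have h₃ : ∀ p ∈ T₃, 0 ≤ linForm (-1) 0 p := fun p =>
    LinearMap.le_apply_of_mem_convexHull (by rintro q (rfl | rfl | rfl) <;> simp [ht0.le])
  have hT₃ : NullMeasurableSet T₃ := (convex_convexHull ℝ _).nullMeasurableSet volume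
  have hT₂₃ : NullMeasurableSet (T₂ ∪ T₃) :=
    ((convex_convexHull ℝ _).nullMeasurableSet volume).union hT₃
  rw [convexHull_pentagon ht0 ht1,
    measure_union_of_forall_le_of_forall_ge volume (linForm_ne_zero (by simp)) h₁ h₂₃ hT₂₃,
    measure_union_of_forall_le_of_forall_ge volume (linForm_ne_zero (by simp)) h₂ h₃ hT₃,
    volume_convexHull_triangle, volume_convexHull_triangle, volume_convexHull_triangle,
    ← ENNReal.ofReal_add (by positivity) (by positivity),
    ← ENNReal.ofReal_add (by positivity) (by positivity)]
  congr 1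
  simp [abs_of_pos ht0]
  ring

theorem volume_convexHull_pentagon_triple_le {t : ℝ} (ht0 : 0 ≤ t) (ht : t ^ 2 + t ≤ 1)
    (i j k : Fin 5) (hij : i < j) (hjk : j < k) :
    volume (convexHull ℝ {pentagon t i, pentagon t j, pentagon t k}) ≤
      ENNReal.ofReal (1 / 2) := by
  rw [volume_convexHull_triangle]
  refine ENNReal.ofReal_le_ofReal (div_le_div_of_nonneg_right (abs_le.2 ?_) zero_le_two)
  fin_cases i <;> fin_cases j <;> fin_cases k <;> simp_all [pentagon] <;> constructor <;> nlinarith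

/-- Sharpness of the bound `√5` for pentagons: for the pentagon with vertices
`(0,0), (1,0), (1,(√5-1)/2), (0,1), ((1-√5)/2,(√5-1)/2)`, the area is `√5/2`,
every vertex triangle has area at most `1/2`, and the triangle `Q₁Q₂Q₄`
has area exactly `1/2`. -/
theorem pentagon_bound_sharp :
    let Q : Fin 5 → ℝ × ℝ :=
      ![(0, 0), (1, 0), (1, (Real.sqrt 5 - 1) / 2), (0, 1),
        ((1 - Real.sqrt 5) / 2, (Real.sqrt 5 - 1) / 2)]
    volume (convexHull ℝ (Set.range Q)) = ENNReal.ofReal (Real.sqrt 5 / 2) ∧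
    (∀ i j k : Fin 5, i < j → j < k →
      volume (convexHull ℝ ({Q i, Q j, Q k} : Set (ℝ × ℝ))) ≤ ENNReal.ofReal (1/2)) ∧
    volume (convexHull ℝ ({Q 0, Q 1, Q 3} : Set (ℝ × ℝ))) = ENNReal.ofReal (1/2) := by
  intro Q
  have h5 : Real.sqrt 5 ^ 2 = 5 := Real.sq_sqrt (by norm_num)
  have hQ : Q = pentagon ((Real.sqrt 5 - 1) / 2) := by
    ext i <;> fin_cases i <;> simp [Q, pentagon]; ring
  have ht0 : 0 < (Real.sqrt 5 - 1) / 2 := by nlinarith [Real.sqrt_nonneg 5]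
  have ht1 : (Real.sqrt 5 - 1) / 2 < 1 := by nlinarith [Real.sqrt_nonneg 5]
  have ht : ((Real.sqrt 5 - 1) / 2) ^ 2 + (Real.sqrt 5 - 1) / 2 = 1 := by nlinarith
  refine ⟨?_, fun i j k => hQ ▸ volume_convexHull_pentagon_triple_le ht0.le ht.le i j k, ?_⟩
  · rw [hQ, volume_convexHull_pentagon ht0 ht1]
    congr 1
    ring
  · exact volume_convexHull_stdTriangle
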